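/- Causal rejection principle: for every dynamic logic program P = ⟨P_i⟩_{i<n}, every i < n, every rule π ∈ P_i and every interpretation J that is an extended WS-model (or an extended RD-model) of P: if J does not satisfy π, then there exist j with i < j < n and a rule σ ∈ P_j such that H(σ) ∈ con(H(π)) and J ⊨ B(σ). -/
import Mathlib


namespace RuleUpdates

/-- Objective literal: an atom (a natural number) or its strong negation. -/
inductive OLit where
  | pos : ℕ → OLit
  | neg : ℕ → OLit
deriving DecidableEq

/-- Strong negation on objective literals (with ¬¬p identified with p). -/
def OLit.compl : OLit → OLit
  | .pos p => .neg p
  | .neg p => .pos p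

/-- Literal: an objective literal or its default negation (not not l = l). -/
inductive Lit where
  | obj : OLit → Lit
  | ndef : OLit → Lit
deriving DecidableEq

/-- Extended rule: a head literal and a finite set of body literals. -/
structure Rule where
  head : Lit
  body : Finset Lit

/-- Interpretation: a consistent set of objective literals. -/
def Interp (J : Set OLit) : Prop :=
  ∀ p : ℕ, ¬ (OLit.pos p ∈ J ∧ OLit.neg p ∈ J)

/-- Satisfaction of a literal. -/
def satLit (J : Set OLit) : Lit → Prop
  | .obj l => l ∈ J
  | .ndef l => l ∉ J

/-- Satisfaction of a set of body literals. -/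
def satBody (J : Set OLit) (B : Finset Lit) : Prop :=
  ∀ L ∈ B, satLit J L

/-- Satisfaction of a rule. -/
def satRule (J : Set OLit) (π : Rule) : Prop :=
  satBody J π.body → satLit J π.head

/-- J is a model of a program. -/
def isModel (J : Set OLit) (P : Set Rule) : Prop :=
  ∀ π ∈ P, satRule J π

/-- J* = J ∪ { not l | l ∈ ℒ ∖ J }, as a set of literals. -/
def star (J : Set OLit) : Set Lit :=
  {L | ∃ l : OLit, (L = Lit.obj l ∧ l ∈ J) ∨ (L = Lit.ndef l ∧ l ∉ J)}

/-- def(J) = { (not l.) | l ∈ ℒ ∖ J }. -/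
def defFacts (J : Set OLit) : Set Rule :=
  {π | ∃ l : OLit, l ∉ J ∧ π = ⟨Lit.ndef l, ∅⟩}

/-- S (a set of literals) is closed under program P, all literals
treated as distinct propositional atoms. -/
def closedUnder (P : Set Rule) (S : Set Lit) : Prop :=
  ∀ π ∈ P, (π.body : Set Lit) ⊆ S → π.head ∈ S

/-- least(P): the least model of P when all literals are treated as
distinct propositional atoms. -/
def leastModel (P : Set Rule) : Set Lit :=
  ⋂₀ {S | closedUnder P S}

/-- Stable model of an extended program: J* = least(P ∪ def(J)). -/
def isStableModel (P : Set Rule) (J : Set OLit) : Prop :=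
  Interp J ∧ star J = leastModel (P ∪ defFacts J)

/-- Level of a literal, with ℓ(not l) = ℓ(l). -/
def litLevel (ℓ : OLit → ℕ) : Lit → ℕ
  | .obj l => ℓ l
  | .ndef l => ℓ l

/-- ℓ↑(S): the maximal level of a literal in the finite set S. -/
def supLevel (ℓ : OLit → ℕ) (S : Finset Lit) : ℕ :=
  S.sup (litLevel ℓ)

/-- ℓ↓(S): the minimal level of a literal in the finite set S. -/
noncomputable def infLevel (ℓ : OLit → ℕ) (S : Finset Lit) : ℕ :=
  sInf (litLevel ℓ '' (S : Set Lit))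

/-- Well-supported model of an extended program w.r.t. a level mapping ℓ. -/
def isWSModelWith (P : Set Rule) (J : Set OLit) (ℓ : OLit → ℕ) : Prop :=
  isModel J P ∧
    ∀ l ∈ J, ∃ π ∈ P, π.head = Lit.obj l ∧ satBody J π.body ∧
      supLevel ℓ π.body < ℓ l

/-- Well-supported model of an extended program. -/
def isWSModel (P : Set Rule) (J : Set OLit) : Prop :=
  Interp J ∧ ∃ ℓ : OLit → ℕ, isWSModelWith P J ℓ

/-- con(L): the literals in conflict with L. -/
def con : Lit → Finset Lit
  | .obj l => {Lit.ndef l, Lit.obj l.compl}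
  | .ndef l => {Lit.obj l}

/-- ρ(P): all rules occurring in the components of the DLP. -/
def allRules {n : ℕ} (P : Fin n → Set Rule) : Set Rule :=
  {π | ∃ i : Fin n, π ∈ P i}

/-- The rule π ∈ P i is rejected w.r.t. the set of literals S:
some later σ with conflicting head has its body included in S. -/
def rejIn {n : ℕ} (P : Fin n → Set Rule) (S : Set Lit) (i : Fin n) (π : Rule) : Prop :=
  ∃ j : Fin n, i < j ∧ ∃ σ ∈ P j, σ.head ∈ con π.head ∧ (σ.body : Set Lit) ⊆ S

/-- rem(P, S) = ρ(P) ∖ rej(P, S), as a set of component-indexed rules. -/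
def remSet {n : ℕ} (P : Fin n → Set Rule) (S : Set Lit) : Set (Fin n × Rule) :=
  {x | x.2 ∈ P x.1 ∧ ¬ rejIn P S x.1 x.2}

/-- The operator T_{P,J}. -/
def TOp {n : ℕ} (P : Fin n → Set Rule) (J : Set OLit) (S : Set Lit) : Set Lit :=
  {L | ((∃ x ∈ remSet P (star J), x.2.head = L ∧ (x.2.body : Set Lit) ⊆ S) ∨
        (∃ l : OLit, l ∉ J ∧ L = Lit.ndef l)) ∧
       ¬ ∃ σ ∈ remSet P S, σ.2.head ∈ con L ∧ (σ.2.body : Set Lit) ⊆ star J}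

/-- Iterates of T_{P,J} starting from ∅. -/
def TIter {n : ℕ} (P : Fin n → Set Rule) (J : Set OLit) : ℕ → Set Lit
  | 0 => ∅
  | k + 1 => TOp P J (TIter P J k)

/-- Extended RD-model of a DLP: J* = ⋃_{k≥0} T_{P,J}^k(∅). -/
def isExtRD {n : ℕ} (P : Fin n → Set Rule) (J : Set OLit) : Prop :=
  Interp J ∧ star J = ⋃ k : ℕ, TIter P J k

/-- rej^ℓ(P, J): π ∈ P i is rejected w.r.t. J and the level mapping ℓ. -/
def rejLvl {n : ℕ} (P : Fin n → Set Rule) (J : Set OLit) (ℓ : OLit → ℕ)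
    (i : Fin n) (π : Rule) : Prop :=
  ∃ j : Fin n, i < j ∧ ∃ σ ∈ P j, σ.head ∈ con π.head ∧ satBody J σ.body ∧
    supLevel ℓ σ.body < infLevel ℓ (con π.head)

/-- Extended WS-model of a DLP. -/
def isExtWS {n : ℕ} (P : Fin n → Set Rule) (J : Set OLit) : Prop :=
  Interp J ∧ ∃ ℓ : OLit → ℕ,
    (∀ i : Fin n, ∀ π ∈ P i, ¬ rejLvl P J ℓ i π → satRule J π) ∧
    (∀ l ∈ J, ∃ x ∈ remSet P (star J), x.2.head = Lit.obj l ∧ satBody J x.2.body ∧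
      supLevel ℓ x.2.body < ℓ l)

/-- A program is acyclic w.r.t. a level mapping ℓ. -/
def acyclicWrt (Q : Set Rule) (ℓ : OLit → ℕ) : Prop :=
  (∀ l : OLit, ℓ l = ℓ l.compl) ∧ ∀ π ∈ Q, supLevel ℓ π.body < litLevel ℓ π.head

lemma satLit_iff_mem_star (J : Set OLit) (L : Lit) : satLit J L ↔ L ∈ star J := by
  cases L with
  | obj l =>
    simp only [satLit, star, Set.mem_setOf_eq]
    constructor
    · exact fun h => ⟨l, Or.inl ⟨rfl, h⟩⟩
    · rintro ⟨m, ⟨h1, h2⟩ | ⟨h1, _⟩⟩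
      · cases h1; exact h2
      · exact Lit.noConfusion h1
  | ndef l =>
    simp only [satLit, star, Set.mem_setOf_eq]
    constructor
    · exact fun h => ⟨l, Or.inr ⟨rfl, h⟩⟩
    · rintro ⟨m, ⟨h1, _⟩ | ⟨h1, h2⟩⟩
      · exact Lit.noConfusion h1
      · cases h1; exact h2

lemma satBody_iff (J : Set OLit) (B : Finset Lit) :
    satBody J B ↔ (B : Set Lit) ⊆ star J := by
  constructor
  · intro h L hL; exact (satLit_iff_mem_star J L).mp (h L hL)
  · intro h L hL; exact (satLit_iff_mem_star J L).mpr (h hL)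

/-- causal rejection principle: any rule of the DLP not satisfied
by an extended WS- or RD-model is rejected by a later rule with conflicting
head whose body is satisfied. -/
theorem causal_rejection (n : ℕ) (P : Fin n → Set Rule) (J : Set OLit)
    (h : isExtWS P J ∨ isExtRD P J) (i : Fin n) (π : Rule) (hπ : π ∈ P i)
    (hns : ¬ satRule J π) :
    ∃ j : Fin n, i < j ∧ ∃ σ ∈ P j, σ.head ∈ con π.head ∧ satBody J σ.body := by
  rcases h with ⟨_, ℓ, hsat, _⟩ | ⟨_, hstar⟩
  · -- WS case
    have hrej : rejLvl P J ℓ i π := by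
      by_contra hcon
      exact hns (hsat i π hπ hcon)
    obtain ⟨j, hij, σ, hσ, hhead, hbody, _⟩ := hrej
    exact ⟨j, hij, σ, hσ, hhead, hbody⟩
  · -- RD case
    by_contra hc
    push_neg at hc
    have hbody : satBody J π.body := by
      by_contra hb; exact hns fun h => absurd h hb
    have hhead : ¬ satLit J π.head := fun h => hns fun _ => h
    have hsub : ∀ m, TIter P J m ⊆ star J := by
      intro m; rw [hstar]; exact Set.subset_iUnion _ m
    have hrem : ∀ m, (i, π) ∈ remSet P (TIter P J m) := by
      intro m
      refine ⟨hπ, ?_⟩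
      rintro ⟨j, hij, σ, hσ, hch, hcb⟩
      exact hc j hij σ hσ hch ((satBody_iff J σ.body).mpr (hcb.trans (hsub m)))
    have hbstar : (π.body : Set Lit) ⊆ star J := (satBody_iff J π.body).mp hbody
    cases hh : π.head with
    | obj l =>
      have hlJ : l ∉ J := by rw [hh] at hhead; exact hhead
      have : Lit.ndef l ∈ star J := ⟨l, Or.inr ⟨rfl, hlJ⟩⟩
      rw [hstar, Set.mem_iUnion] at this
      obtain ⟨m, hm⟩ := this
      cases m with
      | zero => exact absurd hm (Set.notMem_empty _)
      | succ k =>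
        obtain ⟨_, hblock⟩ := hm
        exact hblock ⟨(i, π), hrem k, by rw [hh]; simp [con], hbstar⟩
    | ndef l =>
      have hlJ : l ∈ J := by
        rw [hh] at hhead
        simpa [satLit] using hhead
      have : Lit.obj l ∈ star J := ⟨l, Or.inl ⟨rfl, hlJ⟩⟩
      rw [hstar, Set.mem_iUnion] at this
      obtain ⟨m, hm⟩ := this
      cases m with
      | zero => exact absurd hm (Set.notMem_empty _)
      | succ k =>
        obtain ⟨_, hblock⟩ := hm
        exact hblock ⟨(i, π), hrem k, by rw [hh]; simp [con], hbstar⟩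

end RuleUpdates
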